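/- Let Φ be a Schwartz function on R^{2n}, Q a cube in R^n with center c_Q and side length ℓ(Q), and Q* the concentric dilate of Q with ℓ(Q*) = 100√n ℓ(Q). For k ∈ Z let Φ_k(y) := 2^{2kn} Φ(2^k y), and define Θ^Q_k(y1,z1) := ∫_{x ∈ (Q*)^c} ∫_{y2 ∈ R^n} |Φ_k(x − y1 − z1, y2)| dy2 dx. Then for all γ, μ ∈ Z with 2^γ ℓ(Q) ≥ 1 and μ ≥ 0, all y1 ∈ Q, and all z1 with |z1| ≤ 2^{−γ+1}, one has Θ^Q_{μ+γ}(y1,z1) ≲ 2^{−μ} (2^γ ℓ(Q))^{−1}. -/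

import Mathlib

open MeasureTheory Filter
open scoped ENNReal Topology

noncomputable section

/-- `ℝⁿ` as a Euclidean space. -/
abbrev ESp (n : ℕ) := EuclideanSpace ℝ (Fin n)

/-- `ℝⁿ × ℝⁿ`, representing `ℝ^{2n}`. -/
abbrev PSp (n : ℕ) := ESp n × ESp n

/-- The (closed) cube in `ℝⁿ` with center `c` and side length `ℓ`. -/
def cube (n : ℕ) (c : ESp n) (ℓ : ℝ) : Set (ESp n) := {x | ∀ i, |x i - c i| ≤ ℓ / 2}

/-- The `L¹`-dilation `Φ_k(y) = 2^{2kn} Φ(2^k y)` of a function on `ℝ^{2n}`. -/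
def dilR {n : ℕ} (Φ : PSp n → ℝ) (k : ℤ) (y : PSp n) : ℝ :=
  ((2:ℝ) ^ k) ^ (2 * n) * Φ ((2:ℝ) ^ k • y)

/-- `Θ^Q_k(y₁,z₁) = ∫_{(Q*)^c} ∫ |Φ_k(x-y₁-z₁, y₂)| dy₂ dx`, where `Q*` is the
concentric dilate of `Q` with `ℓ(Q*) = 100√n ℓ(Q)`. -/
def ΘΦ {n : ℕ} (Φ : PSp n → ℝ) (k : ℤ) (c : ESp n) (ℓ : ℝ) (y1 z1 : ESp n) : ℝ :=
  ∫ x in (cube n c (100 * Real.sqrt n * ℓ))ᶜ, ∫ y2 : ESp n,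
    |dilR Φ k (x - y1 - z1, y2)|

/-!
Bound `|Φ(a, b)|` by `D (1 + |a|)^{-(q+1)} (1 + |b|)^{-q}` with `q = n + 1`. Integrating out `y₂`
gives `∫ |Φ_k(u, ·)| ≲ 2^{kn} (1 + 2^k |u|)^{-(q+1)}`. For `x ∉ Q*`, `y₁ ∈ Q` and
`|z₁| ≤ 2ℓ(Q)` one has `ℓ(Q) ≤ |x - c_Q| ≤ 2 |x - y₁ - z₁|`, so one power of the weight is traded
for `(2^k ℓ(Q))⁻¹` while the remaining `q`-th power, recentred at `c_Q`, integrates in `x` to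
`≲ 2^{-kn}`. With `k = μ + γ` this is `2^{-μ} (2^γ ℓ(Q))⁻¹`; note `2^{-γ+1} ≤ 2ℓ(Q)`.
-/

theorem integrable_inv_one_add_norm_pow {E : Type*} [NormedAddCommGroup E] [NormedSpace ℝ E]
    [FiniteDimensional ℝ E] [MeasurableSpace E] [BorelSpace E]
    (μ : Measure E) [μ.IsAddHaarMeasure] {m : ℕ}
    (hm : Module.finrank ℝ E < m) : Integrable (fun x : E => ((1 + ‖x‖) ^ m)⁻¹) μ := by
  refine (integrable_one_add_norm (μ := μ) (r := m) (by exact_mod_cast hm)).congr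
    (Eventually.of_forall fun x => ?_)
  simp only [Real.rpow_neg (by positivity : (0:ℝ) ≤ 1 + ‖x‖), Real.rpow_natCast]

theorem SchwartzMap.exists_bound_prod {E F G : Type*} [NormedAddCommGroup E] [NormedSpace ℝ E]
    [NormedAddCommGroup F] [NormedSpace ℝ F] [NormedAddCommGroup G] [NormedSpace ℝ G]
    (Φ : SchwartzMap (E × F) G) (p q : ℕ) :
    ∃ D, 0 ≤ D ∧ ∀ a b, ‖Φ (a, b)‖ ≤ D * ((1 + ‖a‖) ^ p)⁻¹ * ((1 + ‖b‖) ^ q)⁻¹ := by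
  set D := 2 ^ (p + q) * (Finset.Iic (p + q, 0)).sup (fun m => SchwartzMap.seminorm ℝ m.1 m.2) Φ
  refine ⟨D, by positivity, fun a b => ?_⟩
  have hdecay : (1 + ‖(a, b)‖) ^ (p + q) * ‖Φ (a, b)‖ ≤ D := by
    simpa [norm_iteratedFDeriv_zero] using
      Φ.one_add_le_sup_seminorm_apply (𝕜 := ℝ) (m := (p + q, 0)) le_rfl le_rfl (a, b)
  have hweight : (1 + ‖a‖) ^ p * (1 + ‖b‖) ^ q ≤ (1 + ‖(a, b)‖) ^ (p + q) := by
    rw [pow_add]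
    gcongr
    · exact norm_fst_le (a, b)
    · exact norm_snd_le (a, b)
  rw [mul_assoc, ← mul_inv, le_mul_inv_iff₀ (by positivity)]
  calc ‖Φ (a, b)‖ * ((1 + ‖a‖) ^ p * (1 + ‖b‖) ^ q)
      ≤ ‖Φ (a, b)‖ * (1 + ‖(a, b)‖) ^ (p + q) := by gcongr
    _ ≤ D := by rw [mul_comm]; exact hdecay

theorem inv_one_add_mul_pow_succ_le {s ℓ r t : ℝ} (hs : 0 < s) (hℓ : 0 < ℓ) (hℓt : ℓ ≤ t)
    (htr : t ≤ 2 * r) (m : ℕ) :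
    ((1 + s * r) ^ (m + 1))⁻¹ ≤ 2 ^ (m + 1) * (s * ℓ)⁻¹ * ((1 + s * t) ^ m)⁻¹ := by
  have hr : 0 ≤ r := by linarith
  have hst : s * ℓ ≤ 1 + s * t := by nlinarith
  have hts : 1 + s * t ≤ 2 * (1 + s * r) := by nlinarith
  calc ((1 + s * r) ^ (m + 1))⁻¹ = 2 ^ (m + 1) * ((2 * (1 + s * r)) ^ (m + 1))⁻¹ := by
        rw [mul_pow]; field_simp
    _ ≤ 2 ^ (m + 1) * (s * ℓ * (1 + s * t) ^ m)⁻¹ := by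
        have ht : 0 < 1 + s * t := by nlinarith
        refine mul_le_mul_of_nonneg_left (inv_anti₀ (by positivity) ?_) (by positivity)
        calc s * ℓ * (1 + s * t) ^ m ≤ (1 + s * t) * (1 + s * t) ^ m := by gcongr
          _ = (1 + s * t) ^ (m + 1) := by ring
          _ ≤ (2 * (1 + s * r)) ^ (m + 1) := by gcongr
    _ = 2 ^ (m + 1) * (s * ℓ)⁻¹ * ((1 + s * t) ^ m)⁻¹ := by rw [mul_inv, mul_assoc]

section Cube

variable {n : ℕ}

theorem isClosed_cube (c : ESp n) (ℓ : ℝ) : IsClosed (cube n c ℓ) := by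
  simp only [cube, Set.ofPred_forall]
  exact isClosed_iInter fun i => isClosed_le (by fun_prop) continuous_const

theorem norm_sub_le_of_mem_cube {c y : ESp n} {ℓ : ℝ} (hℓ : 0 ≤ ℓ) (hy : y ∈ cube n c ℓ) :
    ‖y - c‖ ≤ √n * (ℓ / 2) := by
  rw [EuclideanSpace.norm_eq, ← Real.sqrt_sq (by positivity : 0 ≤ ℓ / 2),
    ← Real.sqrt_mul n.cast_nonneg]
  gcongr
  calc ∑ i, ‖(y - c) i‖ ^ 2 ≤ ∑ _i : Fin n, (ℓ / 2) ^ 2 := by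
        gcongr with i
        simpa [Real.norm_eq_abs] using hy i
    _ = n * (ℓ / 2) ^ 2 := by simp

theorem le_norm_sub_le_two_mul_norm_sub_of_notMem_dilate {c x y z : ESp n} {ℓ : ℝ}
    (hℓ : 0 ≤ ℓ) (hx : x ∉ cube n c (100 * √n * ℓ)) (hy : y ∈ cube n c ℓ) (hz : ‖z‖ ≤ 2 * ℓ) :
    ℓ ≤ ‖x - c‖ ∧ ‖x - c‖ ≤ 2 * ‖x - y - z‖ := by
  simp only [cube, Set.mem_ofPred_eq, not_forall, not_le] at hx
  obtain ⟨i, hi⟩ := hx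
  have hxc : 100 * √n * ℓ / 2 < ‖x - c‖ :=
    hi.trans_le (by simpa using PiLp.norm_apply_le (x - c) i)
  -- the coordinate `i` witnessing `x ∉ Q*` shows `n ≠ 0`
  have hn : 1 ≤ √n := Real.one_le_sqrt.2 (by exact_mod_cast Fin.pos i)
  have hyc := norm_sub_le_of_mem_cube hℓ hy
  have htri : ‖x - c‖ ≤ ‖x - y - z‖ + ‖y - c‖ + ‖z‖ := by
    calc ‖x - c‖ = ‖(x - y - z) + (y - c) + z‖ := by abel_nf
      _ ≤ _ := norm_add₃_le
  have hℓn : ℓ ≤ √n * ℓ := le_mul_of_one_le_left hℓ hn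
  constructor <;> nlinarith

end Cube

section Dilation

variable {n : ℕ} {Φ : PSp n → ℝ} {D : ℝ} {p q : ℕ}

theorem integral_abs_dilR_le (hq : n < q)
    (hΦ : ∀ a b, |Φ (a, b)| ≤ D * ((1 + ‖a‖) ^ p)⁻¹ * ((1 + ‖b‖) ^ q)⁻¹) (k : ℤ) (u : ESp n) :
    ∫ y, |dilR Φ k (u, y)| ≤
      ((2:ℝ) ^ k) ^ n * D * (∫ v : ESp n, ((1 + ‖v‖) ^ q)⁻¹) * ((1 + 2 ^ k * ‖u‖) ^ p)⁻¹ := by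
  set s : ℝ := 2 ^ k
  have hs : 0 < s := by positivity
  have hpt : ∀ y : ESp n, |dilR Φ k (u, y)| ≤
      s ^ (2 * n) * D * ((1 + s * ‖u‖) ^ p)⁻¹ * ((1 + ‖s • y‖) ^ q)⁻¹ := by
    intro y
    have h := hΦ (s • u) (s • y)
    rw [norm_smul, Real.norm_of_nonneg hs.le] at h
    rw [dilR, Prod.smul_mk, abs_mul, abs_of_pos (by positivity)]
    calc s ^ (2 * n) * |Φ (s • u, s • y)|
        ≤ s ^ (2 * n) * (D * ((1 + s * ‖u‖) ^ p)⁻¹ * ((1 + ‖s • y‖) ^ q)⁻¹) := by gcongr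
      _ = _ := by ring
  have hint : Integrable (fun y : ESp n => ((1 + ‖s • y‖) ^ q)⁻¹) :=
    (integrable_inv_one_add_norm_pow volume (by simpa using hq)).comp_smul hs.ne'
  calc ∫ y, |dilR Φ k (u, y)|
      ≤ ∫ y : ESp n, s ^ (2 * n) * D * ((1 + s * ‖u‖) ^ p)⁻¹ * ((1 + ‖s • y‖) ^ q)⁻¹ :=
        integral_mono_of_nonneg (Eventually.of_forall fun _ => abs_nonneg _) (hint.const_mul _)
          (Eventually.of_forall hpt)
    _ = _ := by
      rw [integral_const_mul, Measure.integral_comp_smul volume (fun y => ((1 + ‖y‖) ^ q)⁻¹),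
        finrank_euclideanSpace_fin, abs_of_pos (by positivity), smul_eq_mul]
      field_simp
      ring

theorem ΘΦ_le (hq : n < q)
    (hΦ : ∀ a b, |Φ (a, b)| ≤ D * ((1 + ‖a‖) ^ (q + 1))⁻¹ * ((1 + ‖b‖) ^ q)⁻¹) (k : ℤ)
    {c y1 z1 : ESp n} {ℓ : ℝ} (hℓ : 0 < ℓ) (hy1 : y1 ∈ cube n c ℓ) (hz1 : ‖z1‖ ≤ 2 * ℓ) :
    ΘΦ Φ k c ℓ y1 z1 ≤
      2 ^ (q + 1) * D * (∫ v : ESp n, ((1 + ‖v‖) ^ q)⁻¹) ^ 2 * ((2:ℝ) ^ k * ℓ)⁻¹ := by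
  set s : ℝ := 2 ^ k
  have hs : 0 < s := by positivity
  set W := ∫ v : ESp n, ((1 + ‖v‖) ^ q)⁻¹ with hW_def
  have hW : 0 ≤ W := integral_nonneg fun _ => by positivity
  have hD : 0 ≤ D := by simpa using (abs_nonneg _).trans (hΦ 0 0)
  set g : ESp n → ℝ := fun x =>
    s ^ n * D * W * (2 ^ (q + 1) * (s * ℓ)⁻¹ * ((1 + ‖s • (x - c)‖) ^ q)⁻¹)
  have hg : Integrable g :=
    ((((integrable_inv_one_add_norm_pow volume (by simpa using hq)).comp_smul hs.ne').comp_sub_right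
      c).const_mul _).const_mul _
  have hbound : ∀ x ∈ (cube n c (100 * √n * ℓ))ᶜ,
      ∫ y2, |dilR Φ k (x - y1 - z1, y2)| ≤ g x := by
    intro x hx
    obtain ⟨hℓx, hxyz⟩ := le_norm_sub_le_two_mul_norm_sub_of_notMem_dilate hℓ.le hx hy1 hz1
    refine (integral_abs_dilR_le hq hΦ k _).trans ?_
    simp only [g, norm_smul, Real.norm_of_nonneg hs.le]
    exact mul_le_mul_of_nonneg_left (inv_one_add_mul_pow_succ_le hs hℓ hℓx hxyz q)
      (mul_nonneg (mul_nonneg (by positivity) hD) hW)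
  calc ΘΦ Φ k c ℓ y1 z1 ≤ ∫ x in (cube n c (100 * √n * ℓ))ᶜ, g x :=
        integral_mono_of_nonneg (Eventually.of_forall fun _ => integral_nonneg fun _ => abs_nonneg _)
          hg.integrableOn
          (ae_restrict_of_forall_mem (isClosed_cube c _).measurableSet.compl hbound)
    _ ≤ ∫ x, g x := setIntegral_le_integral hg (Eventually.of_forall fun _ => by positivity)
    _ = _ := by
      simp only [g]
      rw [integral_const_mul, integral_const_mul,
        integral_sub_right_eq_self (fun x => ((1 + ‖s • x‖) ^ q)⁻¹) c,
        Measure.integral_comp_smul volume (fun y => ((1 + ‖y‖) ^ q)⁻¹),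
        finrank_euclideanSpace_fin, abs_of_pos (by positivity), smul_eq_mul, ← hW_def]
      field_simp

end Dilation

theorem stmt17_general (n : ℕ) (Φ : SchwartzMap (PSp n) ℝ) :
    ∃ C : ℝ, 0 < C ∧
      ∀ (γ μ : ℤ), 0 ≤ μ → ∀ (c : ESp n) (ℓ : ℝ), 0 < ℓ →
        1 ≤ (2:ℝ) ^ γ * ℓ → ∀ y1 ∈ cube n c ℓ, ∀ z1 : ESp n,
          ‖z1‖ ≤ (2:ℝ) ^ (-γ + 1) →
          ΘΦ (⇑Φ) (μ + γ) c ℓ y1 z1 ≤ C * ((2:ℝ) ^ μ)⁻¹ * ((2:ℝ) ^ γ * ℓ)⁻¹ := by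
  obtain ⟨D, hD, hΦ⟩ := Φ.exists_bound_prod (n + 2) (n + 1)
  set K := 2 ^ (n + 2) * D * (∫ v : ESp n, ((1 + ‖v‖) ^ (n + 1))⁻¹) ^ 2
  have hK : 0 ≤ K := by positivity
  refine ⟨K + 1, by linarith, fun γ μ _ c ℓ hℓ hγℓ y1 hy1 z1 hz1 => ?_⟩
  have hz1' : ‖z1‖ ≤ 2 * ℓ := by
    calc ‖z1‖ ≤ 2 ^ (-γ + 1) := hz1
      _ = 2 * ((2:ℝ) ^ γ)⁻¹ := by rw [zpow_add₀ two_ne_zero, zpow_neg, zpow_one, mul_comm]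
      _ ≤ 2 * ℓ := by gcongr; exact (inv_le_iff_one_le_mul₀' (by positivity)).2 hγℓ
  calc ΘΦ Φ (μ + γ) c ℓ y1 z1 ≤ K * ((2:ℝ) ^ (μ + γ) * ℓ)⁻¹ :=
        ΘΦ_le (by omega) (fun a b => by simpa using hΦ a b) _ hℓ hy1 hz1'
    _ ≤ (K + 1) * ((2:ℝ) ^ μ)⁻¹ * ((2:ℝ) ^ γ * ℓ)⁻¹ := by
        rw [zpow_add₀ two_ne_zero, mul_assoc (2 ^ μ), mul_inv, ← mul_assoc]
        gcongr
        linarith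

/-- estimate (4.11): if `2^γ ℓ(Q) ≥ 1` and `μ ≥ 0`, then for
`y₁ ∈ Q` and `|z₁| ≤ 2^{-γ+1}` one has `Θ^Q_{μ+γ} ≲ 2^{-μ} (2^γ ℓ(Q))⁻¹`. -/
theorem stmt17 (n : ℕ) (hn : 1 ≤ n) (Φ : SchwartzMap (PSp n) ℝ) :
    ∃ C : ℝ, 0 < C ∧
      ∀ (γ μ : ℤ), 0 ≤ μ → ∀ (c : ESp n) (ℓ : ℝ), 0 < ℓ →
        1 ≤ (2:ℝ) ^ γ * ℓ → ∀ y1 ∈ cube n c ℓ, ∀ z1 : ESp n,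
          ‖z1‖ ≤ (2:ℝ) ^ (-γ + 1) →
          ΘΦ (⇑Φ) (μ + γ) c ℓ y1 z1 ≤ C * ((2:ℝ) ^ μ)⁻¹ * ((2:ℝ) ^ γ * ℓ)⁻¹ :=
  stmt17_general n Φ
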